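/- arXiv:1306.3840 — 9 statements merged into one kernel-verified Lean document; each statement's English description precedes it below -/
import Mathlib

section
/- There is a bijective correspondence between a set X and the set of all nonzero K-algebra homomorphisms from F₀(X) to K, given by sending x ∈ X to the evaluation map ε_x(f) = f(x). -/
/-!
A nonzero character `φ` of `X →₀ K` sends each idempotent `single x 1` to `0` or `1`, and cannot
kill all of them since they span. If `φ (single y 1) = 1`, then for `z ≠ y` the orthogonality
`single z 1 * single y 1 = 0` forces `φ (single z 1) = 0`, so `φ` agrees with evaluation at `y`
on a spanning set.
-/

open Function

namespace Finsupp

variable {R X : Type*} [Semiring R]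

lemma single_mul_single_of_ne {x y : X} (h : x ≠ y) (a b : R) :
    single x a * single y b = 0 := by
  ext z
  rcases eq_or_ne z x with rfl | hzx
  · simp [single_eq_of_ne h]
  · simp [single_eq_of_ne hzx]

variable (R) in
def evalNonUnitalAlgHom (x : X) : (X →₀ R) →ₙₐ[R] R where
  toFun f := f x
  map_add' _ _ := rfl
  map_smul' _ _ := rfl
  map_zero' := rfl
  map_mul' _ _ := rfl

@[simp]
lemma evalNonUnitalAlgHom_apply (x : X) (f : X →₀ R) : evalNonUnitalAlgHom R x f = f x := rfl

lemma evalNonUnitalAlgHom_ne_zero [Nontrivial R] (x : X) : evalNonUnitalAlgHom R x ≠ 0 :=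
  fun h ↦ by simpa using DFunLike.congr_fun h (single x 1)

lemma evalNonUnitalAlgHom_injective [Nontrivial R] :
    Injective (evalNonUnitalAlgHom R : X → (X →₀ R) →ₙₐ[R] R) := by
  intro x y h
  by_contra hxy
  simpa [single_eq_of_ne hxy] using DFunLike.congr_fun h (single y 1)

end Finsupp

namespace NonUnitalAlgHom

open Finsupp

variable {R X : Type*} [Semiring R]

lemma finsupp_ext_single_one {φ ψ : (X →₀ R) →ₙₐ[R] R}
    (h : ∀ x, φ (single x 1) = ψ (single x 1)) : φ = ψ := by
  ext f
  induction f using Finsupp.induction_linear with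
  | zero => simp
  | add f g hf hg => simp [hf, hg]
  | single x c =>
    rw [← mul_one c, ← smul_eq_mul, ← smul_single, map_smul, map_smul, h]

lemma exists_eq_evalNonUnitalAlgHom [IsLeftCancelMulZero R] (φ : (X →₀ R) →ₙₐ[R] R)
    (hφ : φ ≠ 0) : ∃ y, φ = evalNonUnitalAlgHom R y := by
  obtain ⟨y, hy⟩ : ∃ y, φ (single y 1) ≠ 0 := by
    by_contra! h
    exact hφ (finsupp_ext_single_one fun x ↦ by simp [h x])
  have hy_one : φ (single y 1) = 1 := by
    have hidem : IsIdempotentElem (φ (single y 1)) := by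
      rw [IsIdempotentElem, ← map_mul, ← single_mul, one_mul]
    exact (IsIdempotentElem.iff_eq_zero_or_one.mp hidem).resolve_left hy
  refine ⟨y, finsupp_ext_single_one fun z ↦ ?_⟩
  rcases eq_or_ne z y with rfl | hzy
  · simp [hy_one]
  · calc φ (single z 1) = φ (single z 1) * φ (single y 1) := by rw [hy_one, mul_one]
      _ = 0 := by rw [← map_mul, single_mul_single_of_ne hzy, map_zero]
      _ = evalNonUnitalAlgHom R y (single z 1) := by simp [single_eq_of_ne' hzy]

end NonUnitalAlgHom

open Finsupp in
/-- There is a bijective correspondence between a set `X` and the set of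
all nonzero `K`-algebra homomorphisms from `F₀(X) = X →₀ K` (with pointwise operations)
to `K`, given by sending `x ∈ X` to the evaluation map `ε_x(f) = f x`. -/
theorem statement0 (K X : Type*) [Field K] :
    ∃ e : X → {φ : (X →₀ K) →ₙₐ[K] K // φ ≠ 0},
      (∀ x f, (e x).1 f = f x) ∧ Function.Bijective e := by
  refine ⟨fun x ↦ ⟨evalNonUnitalAlgHom K x, evalNonUnitalAlgHom_ne_zero x⟩, fun _ _ ↦ rfl,
    fun x y h ↦ evalNonUnitalAlgHom_injective (congrArg Subtype.val h), ?_⟩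
  rintro ⟨φ, hφ⟩
  obtain ⟨y, rfl⟩ := φ.exists_eq_evalNonUnitalAlgHom hφ
  exact ⟨y, rfl⟩
end

section
/- Every nonzero K-algebra homomorphism φ : F₀(X) → K is an evaluation map: there exists a unique x ∈ X such that φ(f) = f(x) for all f ∈ F₀(X). -/
/-- Every nonzero `K`-algebra homomorphism `φ : F₀(X) → K`
(`F₀(X) = X →₀ K` with pointwise operations, homomorphism = `K`-linear multiplicative map)
is an evaluation: there is a unique `x ∈ X` with `φ f = f x` for all `f`. -/
theorem statement1 (K X : Type*) [Field K] (φ : (X →₀ K) →ₙₐ[K] K) (hφ : φ ≠ 0) :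
    ∃! x : X, ∀ f : X →₀ K, φ f = f x := by
  classical
  -- there is g with φ g ≠ 0
  have h1 : ∃ g : X →₀ K, φ g ≠ 0 := by
    by_contra h; push_neg at h
    exact hφ (by ext g; exact h g)
  obtain ⟨g, hg⟩ := h1
  -- hence some x with φ (single x 1) ≠ 0
  have hx : ∃ x : X, φ (Finsupp.single x (1 : K)) ≠ 0 := by
    by_contra h; push_neg at h
    apply hg
    have hgsum : g = g.sum fun y c => Finsupp.single y c := (Finsupp.sum_single g).symm
    rw [hgsum, map_finsuppSum]
    refine Finset.sum_eq_zero fun y _ => ?_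
    show φ (Finsupp.single y (g y)) = 0
    have : Finsupp.single y (g y) = (g y) • Finsupp.single y (1 : K) := by
      rw [Finsupp.smul_single, smul_eq_mul, mul_one]
    rw [this, map_smul, h y, smul_zero]
  obtain ⟨x, hex⟩ := hx
  set e : X →₀ K := Finsupp.single x (1 : K) with he
  have hee : e * e = e := by
    ext a
    rw [Finsupp.mul_apply]
    by_cases hax : a = x
    · subst hax; simp [he]
    · simp [he, Finsupp.single_apply, Ne.symm hax]
  have hone : φ e = 1 := by
    have h2 := map_mul φ e e
    rw [hee] at h2
    exact mul_left_cancel₀ hex (show φ e * φ e = φ e * 1 by rw [mul_one, ← h2])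
  have hval : ∀ f : X →₀ K, φ f = f x := by
    intro f
    have hsplit : f = Finsupp.single x (f x) + (f - Finsupp.single x (f x)) := by abel
    have hz : (f - Finsupp.single x (f x)) * e = 0 := by
      ext a
      rw [Finsupp.mul_apply]
      by_cases hax : a = x
      · subst hax; simp
      · simp [he, Finsupp.single_apply, Ne.symm hax]
    have hφz : φ (f - Finsupp.single x (f x)) = 0 := by
      have := map_mul φ (f - Finsupp.single x (f x)) e
      rw [hz, map_zero, hone, mul_one] at this
      exact this.symm
    have hsing : φ (Finsupp.single x (f x)) = f x := by
      have : Finsupp.single x (f x) = (f x) • e := by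
        rw [he, Finsupp.smul_single, smul_eq_mul, mul_one]
      rw [this, map_smul, hone, smul_eq_mul, mul_one]
    calc φ f = φ (Finsupp.single x (f x) + (f - Finsupp.single x (f x))) := by rw [← hsplit]
    _ = φ (Finsupp.single x (f x)) + φ (f - Finsupp.single x (f x)) := map_add φ _ _
    _ = f x := by rw [hφz, hsing, add_zero]
  refine ⟨x, hval, fun y hy => ?_⟩
  have h1 : (1 : K) = e y := by rw [← hone, hy e]
  by_contra hne
  rw [he, Finsupp.single_apply, if_neg (fun h => hne h.symm)] at h1
  exact one_ne_zero h1
end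

section
/- Given a partial action ({X_t}, {h_t}) of a group G on a set X, setting D_t = F₀(X_t) (functions supported in X_t) and α_t : D_{t⁻¹} → D_t, α_t(f) = f ∘ h_{t⁻¹}, yields a partial action ({D_t}, {α_t}) of G on the K-algebra F₀(X) by ideals and algebra isomorphisms. -/
/-- A partial action of a group `G` on a (possibly non-unital) `K`-algebra `A`:
two-sided ideals `D t` (with `D e = A`) together with `K`-algebra isomorphisms
`α t : D t⁻¹ → D t` (modelled as total functions constrained on `D t⁻¹`)
satisfying the partial action axioms. -/
structure AlgPartialAction (G : Type*) [Group G] (K : Type*) [Field K]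
    (A : Type*) [NonUnitalRing A] [Module K A] where
  /-- the ideals `D_t` -/
  D : G → Set A
  /-- the isomorphisms `α_t : D_{t⁻¹} → D_t`, as total functions -/
  α : G → A → A
  D_add : ∀ t, ∀ a ∈ D t, ∀ b ∈ D t, a + b ∈ D t
  D_zero : ∀ t, (0 : A) ∈ D t
  D_smul : ∀ t (k : K), ∀ a ∈ D t, k • a ∈ D t
  D_mul_right : ∀ t, ∀ a ∈ D t, ∀ b : A, a * b ∈ D t
  D_mul_left : ∀ t, ∀ a ∈ D t, ∀ b : A, b * a ∈ D t
  D_one : D 1 = Set.univ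
  α_one : ∀ a, α 1 a = a
  α_maps : ∀ t, ∀ a ∈ D t⁻¹, α t a ∈ D t
  α_add : ∀ t, ∀ a ∈ D t⁻¹, ∀ b ∈ D t⁻¹, α t (a + b) = α t a + α t b
  α_smul : ∀ t (k : K), ∀ a ∈ D t⁻¹, α t (k • a) = k • α t a
  α_mul : ∀ t, ∀ a ∈ D t⁻¹, ∀ b ∈ D t⁻¹, α t (a * b) = α t a * α t b
  α_inv : ∀ t, ∀ a ∈ D t⁻¹, α t⁻¹ (α t a) = a
  α_image : ∀ t s, α t '' (D t⁻¹ ∩ D s) = D t ∩ D (t * s)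
  α_comp : ∀ t s, ∀ a ∈ D s⁻¹, a ∈ D (s⁻¹ * t⁻¹) → α t (α s a) = α (t * s) a

/-- A partial action `θ = ({X_t}, {h_t})` of a group `G` on a set `X`.
Each `h t` is modelled as a total function `X → X` whose behaviour is only
constrained on the domain `Xt t⁻¹`; the axioms say that `h t` restricts to a
bijection from `Xt t⁻¹` onto `Xt t` (with inverse `h t⁻¹`) and that the usual
partial action axioms hold. -/
structure PartialAction (G X : Type*) [Group G] where
  /-- the domains `X_t` -/
  Xt : G → Set X
  /-- the partial bijections `h_t`, as total functions -/
  h : G → X → X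
  Xt_one : Xt 1 = Set.univ
  h_one : ∀ x, h 1 x = x
  maps_to : ∀ t x, x ∈ Xt t⁻¹ → h t x ∈ Xt t
  h_inv : ∀ t x, x ∈ Xt t⁻¹ → h t⁻¹ (h t x) = x
  image_eq : ∀ t s, h t '' (Xt t⁻¹ ∩ Xt s) = Xt t ∩ Xt (t * s)
  h_comp : ∀ t s x, x ∈ Xt s⁻¹ → x ∈ Xt (s⁻¹ * t⁻¹) → h t (h s x) = h (t * s) x

variable {G X : Type*} [Group G]

/-- A partial action is free if `h t x = x` for some `x ∈ X_{t⁻¹}` implies `t = e`. -/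
def PartialAction.Free (pa : PartialAction G X) : Prop :=
  ∀ t x, x ∈ pa.Xt t⁻¹ → pa.h t x = x → t = 1

/-- The equivalence relation `R` associated to a partial action. -/
def PartialAction.Rel (pa : PartialAction G X) : Set (X × X) :=
  {p | ∃ t, p.1 ∈ pa.Xt t⁻¹ ∧ pa.h t p.1 = p.2}

/-! On `F₀(X_{t⁻¹})` the map `f ↦ f ∘ h_{t⁻¹}` is the pushforward `mapDomain (h t)`, because
`h t` is injective on `X_{t⁻¹}` with inverse `h t⁻¹`. Pushforward is additive and `K`-linear, so
only the multiplicativity and the partial action axioms need checking, and these are checked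
pointwise. The one fact about the set-level action that makes them go through is that for
`x ∈ X_t` we have `h_{t⁻¹} x ∈ X_s ↔ x ∈ X_{ts}`, a reformulation of `h_t(X_{t⁻¹} ∩ X_s) = X_t ∩ X_{ts}`. -/

open Finsupp

section Supported

variable {X R : Type*} [Semiring R] {s : Set X} {f : X →₀ R}

theorem Finsupp.mul_mem_supported_left (hf : f ∈ supported R R s) (g : X →₀ R) :
    f * g ∈ supported R R s :=
  (mem_supported' R _).mpr fun x hx => by rw [mul_apply, (mem_supported' R f).mp hf x hx, zero_mul]

theorem Finsupp.mul_mem_supported_right (g : X →₀ R) (hf : f ∈ supported R R s) :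
    g * f ∈ supported R R s :=
  (mem_supported' R _).mpr fun x hx => by rw [mul_apply, (mem_supported' R f).mp hf x hx, mul_zero]

end Supported

namespace PartialAction

variable (pa : PartialAction G X)

theorem h_inv_mem {t : G} {x : X} (hx : x ∈ pa.Xt t) : pa.h t⁻¹ x ∈ pa.Xt t⁻¹ :=
  pa.maps_to t⁻¹ x (by rwa [inv_inv])

theorem h_h_inv {t : G} {x : X} (hx : x ∈ pa.Xt t) : pa.h t (pa.h t⁻¹ x) = x := by
  simpa only [inv_inv] using pa.h_inv t⁻¹ x (by rwa [inv_inv])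

theorem injOn_h (t : G) : Set.InjOn (pa.h t) (pa.Xt t⁻¹) := fun a ha b hb hab => by
  rw [← pa.h_inv t a ha, hab, pa.h_inv t b hb]

theorem h_inv_mem_iff {t : G} {x : X} (hx : x ∈ pa.Xt t) (s : G) :
    pa.h t⁻¹ x ∈ pa.Xt s ↔ x ∈ pa.Xt (t * s) := by
  have hts : x ∈ pa.Xt (t * s) ↔ x ∈ pa.h t '' (pa.Xt t⁻¹ ∩ pa.Xt s) := by
    rw [pa.image_eq]; exact (and_iff_right hx).symm
  rw [hts]
  constructor
  · intro hs
    exact ⟨_, ⟨pa.h_inv_mem hx, hs⟩, pa.h_h_inv hx⟩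
  · rintro ⟨y, ⟨hy, hys⟩, rfl⟩
    rwa [pa.h_inv t y hy]

variable {R : Type*} [Semiring R] {t s : G} {f : X →₀ R}

theorem mapDomain_h_apply_of_mem (hf : f ∈ supported R R (pa.Xt t⁻¹)) {x : X}
    (hx : x ∈ pa.Xt t) : mapDomain (pa.h t) f x = f (pa.h t⁻¹ x) := by
  rw [← mapDomain_apply' _ f hf (pa.injOn_h t) (pa.h_inv_mem hx), pa.h_h_inv hx]

theorem mapDomain_h_apply_of_notMem (hf : f ∈ supported R R (pa.Xt t⁻¹)) {x : X}
    (hx : x ∉ pa.Xt t) : mapDomain (pa.h t) f x = 0 := by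
  classical
  refine notMem_support_iff.mp fun hx' => hx ?_
  obtain ⟨y, hy, rfl⟩ := Finset.mem_image.mp (mapDomain_support hx')
  exact pa.maps_to t y (hf hy)

theorem mapDomain_h_mem_supported (hf : f ∈ supported R R (pa.Xt t⁻¹)) :
    mapDomain (pa.h t) f ∈ supported R R (pa.Xt t) :=
  (mem_supported' R _).mpr fun _ => pa.mapDomain_h_apply_of_notMem hf

theorem mapDomain_h_mem_supported_mul (hf : f ∈ supported R R (pa.Xt t⁻¹))
    (hfs : f ∈ supported R R (pa.Xt s)) :
    mapDomain (pa.h t) f ∈ supported R R (pa.Xt (t * s)) := by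
  refine (mem_supported' R _).mpr fun x hx => ?_
  by_cases hxt : x ∈ pa.Xt t
  · rw [pa.mapDomain_h_apply_of_mem hf hxt]
    exact (mem_supported' R f).mp hfs _ (mt (pa.h_inv_mem_iff hxt s).mp hx)
  · exact pa.mapDomain_h_apply_of_notMem hf hxt

theorem mapDomain_h_mul {g : X →₀ R} (hf : f ∈ supported R R (pa.Xt t⁻¹))
    (hg : g ∈ supported R R (pa.Xt t⁻¹)) :
    mapDomain (pa.h t) (f * g) = mapDomain (pa.h t) f * mapDomain (pa.h t) g := by
  have hfg := mul_mem_supported_left hf g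
  ext x
  by_cases hx : x ∈ pa.Xt t
  · rw [mul_apply, pa.mapDomain_h_apply_of_mem hfg hx, pa.mapDomain_h_apply_of_mem hf hx,
      pa.mapDomain_h_apply_of_mem hg hx, mul_apply]
  · rw [mul_apply, pa.mapDomain_h_apply_of_notMem hfg hx, pa.mapDomain_h_apply_of_notMem hf hx,
      zero_mul]

theorem mapDomain_h_inv_mapDomain_h (hf : f ∈ supported R R (pa.Xt t⁻¹)) :
    mapDomain (pa.h t⁻¹) (mapDomain (pa.h t) f) = f := by
  have hg : mapDomain (pa.h t) f ∈ supported R R (pa.Xt t⁻¹⁻¹) := by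
    rw [inv_inv]; exact pa.mapDomain_h_mem_supported hf
  ext x
  by_cases hx : x ∈ pa.Xt t⁻¹
  · rw [pa.mapDomain_h_apply_of_mem hg hx, inv_inv,
      pa.mapDomain_h_apply_of_mem hf (pa.maps_to t x hx), pa.h_inv t x hx]
  · rw [pa.mapDomain_h_apply_of_notMem hg hx, (mem_supported' R f).mp hf x hx]

theorem mapDomain_h_image (t s : G) :
    mapDomain (pa.h t) '' ((supported R R (pa.Xt t⁻¹) : Set (X →₀ R)) ∩ supported R R (pa.Xt s)) =
      (supported R R (pa.Xt t) : Set (X →₀ R)) ∩ supported R R (pa.Xt (t * s)) := by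
  refine Set.Subset.antisymm ?_ fun g ⟨hgt, hgts⟩ => ?_
  · rintro _ ⟨f, ⟨hft, hfs⟩, rfl⟩
    exact ⟨pa.mapDomain_h_mem_supported hft, pa.mapDomain_h_mem_supported_mul hft hfs⟩
  · rw [← inv_inv t] at hgt
    refine ⟨mapDomain (pa.h t⁻¹) g, ⟨pa.mapDomain_h_mem_supported hgt, ?_⟩, ?_⟩
    · simpa only [SetLike.mem_coe, inv_mul_cancel_left] using
        pa.mapDomain_h_mem_supported_mul hgt hgts
    · simpa only [inv_inv] using pa.mapDomain_h_inv_mapDomain_h hgt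

theorem mapDomain_h_mapDomain_h (hf : f ∈ supported R R (pa.Xt s⁻¹))
    (hfts : f ∈ supported R R (pa.Xt (s⁻¹ * t⁻¹))) :
    mapDomain (pa.h t) (mapDomain (pa.h s) f) = mapDomain (pa.h (t * s)) f := by
  have hg : mapDomain (pa.h s) f ∈ supported R R (pa.Xt t⁻¹) := by
    simpa only [mul_inv_cancel_left] using pa.mapDomain_h_mem_supported_mul hf hfts
  rw [← mul_inv_rev] at hfts
  have hts : mapDomain (pa.h (t * s)) f ∈ supported R R (pa.Xt t) := by
    simpa only [mul_inv_cancel_right] using pa.mapDomain_h_mem_supported_mul hfts hf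
  ext x
  by_cases hxt : x ∈ pa.Xt t
  · rw [pa.mapDomain_h_apply_of_mem hg hxt]
    by_cases hxts : x ∈ pa.Xt (t * s)
    · have hxs := (pa.h_inv_mem_iff hxt s).mpr hxts
      rw [pa.mapDomain_h_apply_of_mem hf hxs, pa.mapDomain_h_apply_of_mem hfts hxts,
        mul_inv_rev, pa.h_comp s⁻¹ t⁻¹ x (by rwa [inv_inv]) (by rwa [inv_inv, inv_inv])]
    · rw [pa.mapDomain_h_apply_of_notMem hfts hxts,
        pa.mapDomain_h_apply_of_notMem hf (mt (pa.h_inv_mem_iff hxt s).mp hxts)]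
  · rw [pa.mapDomain_h_apply_of_notMem hg hxt, (mem_supported' R _).mp hts x hxt]

end PartialAction

/-- A partial action `({X_t}, {h_t})` of `G` on the set `X` induces a
partial action of `G` on the `K`-algebra `F₀(X) = X →₀ K` by the ideals
`D t = F₀(X_t) = {f : f = 0 off X_t}` and the isomorphisms `α t f = f ∘ h t⁻¹`
(i.e. `(α t f) x = f (h t⁻¹ x)` for `x ∈ X_t`, and `(α t f) x = 0` for `x ∉ X_t`). -/
theorem statement7 (K : Type*) [Field K] {G X : Type*} [Group G]
    (pa : PartialAction G X) :
    ∃ ap : AlgPartialAction G K (X →₀ K),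
      (∀ t, ap.D t = {f : X →₀ K | ∀ x ∉ pa.Xt t, f x = 0}) ∧
      (∀ t, ∀ f ∈ ap.D t⁻¹,
        (∀ x ∈ pa.Xt t, ap.α t f x = f (pa.h t⁻¹ x)) ∧
        (∀ x ∉ pa.Xt t, ap.α t f x = 0)) := by
  refine ⟨{ D := fun t => supported K K (pa.Xt t)
            α := fun t => mapDomain (pa.h t)
            D_add := fun _ _ ha _ hb => add_mem ha hb
            D_zero := fun _ => zero_mem _
            D_smul := fun _ k _ ha => Submodule.smul_mem _ k ha
            D_mul_right := fun _ _ ha b => mul_mem_supported_left ha b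
            D_mul_left := fun _ _ ha b => mul_mem_supported_right b ha
            D_one := by rw [pa.Xt_one, supported_univ, Submodule.top_coe]
            α_one := fun f => by rw [show pa.h 1 = id from funext pa.h_one, mapDomain_id]
            α_maps := fun _ _ => pa.mapDomain_h_mem_supported
            α_add := fun _ _ _ _ _ => mapDomain_add
            α_smul := fun _ k a _ => mapDomain_smul k a
            α_mul := fun _ _ ha _ hb => pa.mapDomain_h_mul ha hb
            α_inv := fun _ _ => pa.mapDomain_h_inv_mapDomain_h
            α_image := pa.mapDomain_h_image
            α_comp := fun _ _ _ => pa.mapDomain_h_mapDomain_h },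
    fun _ => Set.ext fun f => mem_supported' K f,
    fun _ _ hf => ⟨fun _ => pa.mapDomain_h_apply_of_mem hf,
      fun _ => pa.mapDomain_h_apply_of_notMem hf⟩⟩
end

section
/- Every partial action α = ({D_t}, {α_t}) of a group G on the algebra F₀(X) arises from a partial action θ = ({X_t}, {h_t}) of G on the set X, i.e., there exist subsets X_t ⊆ X and bijections h_t : X_{t⁻¹} → X_t forming a partial action on X such that D_t = F₀(X_t) and α_t(f) = f ∘ h_{t⁻¹}. -/
variable {G X : Type*} [Group G]

/-!
The ideals of `F₀(X)` are exactly the spaces `F₀(Y)`, where `Y` is the set of points whose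
indicator `δ_x` lies in the ideal. An ideal isomorphism `α_t` sends `δ_x` to a nonzero
idempotent `e` satisfying `e * α_t f = f(x) • e`; evaluating this at a point of the support of
`e` and comparing with the image of `δ_y` shows `e = δ_y`. This defines `h_t x := y`, the
partial action axioms for `h` are those of `α` read off on indicators, and evaluating
`δ_x * α_t f = f(h_{t⁻¹} x) • δ_x` at `x` gives `α_t f = f ∘ h_{t⁻¹}`.
-/

namespace Finsupp

variable {X R : Type*} [Semiring R]

theorem single_one_mul_eq_smul (x : X) (f : X →₀ R) : single x 1 * f = f x • single x 1 := by
  ext y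
  rcases eq_or_ne x y with rfl | hxy
  · simp
  · simp [hxy]

theorem mul_single_one (f : X →₀ R) (y : X) : f * single y 1 = single y (f y) := by
  ext z
  rcases eq_or_ne y z with rfl | hyz
  · simp
  · simp [hyz]

end Finsupp

namespace AlgPartialAction

open Finsupp

section General

variable {K : Type*} [Field K] {A : Type*} [NonUnitalRing A] [Module K A]
  (ap : AlgPartialAction G K A)

def domain (t : G) : Submodule K A where
  carrier := ap.D t
  add_mem' ha hb := ap.D_add t _ ha _ hb
  zero_mem' := ap.D_zero t
  smul_mem' k _ ha := ap.D_smul t k _ ha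

theorem α_zero (t : G) : ap.α t 0 = 0 := by
  simpa using ap.α_smul t 0 0 (ap.D_zero _)

theorem α_α_inv (t : G) {a : A} (ha : a ∈ ap.D t) : ap.α t (ap.α t⁻¹ a) = a := by
  simpa using ap.α_inv t⁻¹ a (by rwa [inv_inv])

theorem α_inv_mem {t : G} {a : A} (ha : a ∈ ap.D t) : ap.α t⁻¹ a ∈ ap.D t⁻¹ :=
  ap.α_maps t⁻¹ a (by rwa [inv_inv])

end General

variable {K : Type*} [Field K] (ap : AlgPartialAction G K (X →₀ K))

theorem single_mem_of_apply_ne_zero {t : G} {f : X →₀ K} (hf : f ∈ ap.D t) {x : X}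
    (hx : f x ≠ 0) : single x (1 : K) ∈ ap.D t := by
  have h := ap.D_smul t (f x)⁻¹ _ (ap.D_mul_left t f hf (single x 1))
  rwa [single_one_mul_eq_smul, smul_smul, inv_mul_cancel₀ hx, one_smul] at h

theorem D_eq (t : G) :
    ap.D t = {f : X →₀ K | ∀ x, single x (1 : K) ∉ ap.D t → f x = 0} := by
  ext f
  refine ⟨fun hf x hx => not_not.mp fun h => hx (ap.single_mem_of_apply_ne_zero hf h),
    fun hf => ?_⟩
  rw [← f.sum_single]
  refine Submodule.sum_mem (ap.domain t) fun x hx => ?_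
  have hmem : single x (1 : K) ∈ ap.D t :=
    not_not.mp fun h => mem_support_iff.mp hx (hf x h)
  simpa using (ap.domain t).smul_mem (f x) hmem

theorem α_single_mul {t : G} {w : X} (hw : single w (1 : K) ∈ ap.D t⁻¹) {f : X →₀ K}
    (hf : f ∈ ap.D t⁻¹) :
    ap.α t (single w 1) * ap.α t f = f w • ap.α t (single w 1) := by
  rw [← ap.α_mul t _ hw _ hf, single_one_mul_eq_smul, ap.α_smul t _ _ hw]

theorem exists_α_single_eq_single {t : G} {x : X} (hx : single x (1 : K) ∈ ap.D t⁻¹) :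
    ∃ y, ap.α t (single x 1) = single y (1 : K) := by
  set e := ap.α t (single x 1) with he
  have he_ne : e ≠ 0 := fun h0 => by
    simpa [← he, h0, α_zero] using (ap.α_inv t _ hx).symm
  have he_idem : e * e = e := by simpa using ap.α_single_mul hx hx
  obtain ⟨y, hy⟩ : ∃ y, e y ≠ 0 := by simpa using Finsupp.ne_iff.mp he_ne
  have hey : e y = 1 := by simpa [hy] using congrArg (· y) he_idem
  have hyD : single y (1 : K) ∈ ap.D t := ap.single_mem_of_apply_ne_zero (ap.α_maps t _ hx) hy
  set g := ap.α t⁻¹ (single y 1)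
  -- `δ_x * g = g(x) • δ_x` transported by `α_t` becomes `δ_y = e * δ_y = g(x) • e`.
  have hg : single y 1 = g x • e := by
    have := ap.α_single_mul hx (ap.α_inv_mem hyD)
    rwa [ap.α_α_inv t hyD, mul_single_one, hey] at this
  have hgx : g x = 1 := (by simpa [hey] using congrArg (· y) hg : 1 = g x).symm
  exact ⟨y, by rw [hg, hgx, one_smul]⟩

open Classical in
noncomputable def pointMap (t : G) (x : X) : X :=
  if hx : single x (1 : K) ∈ ap.D t⁻¹ then (ap.exists_α_single_eq_single hx).choose else x

theorem α_single {t : G} {x : X} (hx : single x (1 : K) ∈ ap.D t⁻¹) :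
    ap.α t (single x 1) = single (ap.pointMap t x) (1 : K) := by
  rw [pointMap, dif_pos hx]
  exact (ap.exists_α_single_eq_single hx).choose_spec

theorem pointMap_mem {t : G} {x : X} (hx : single x (1 : K) ∈ ap.D t⁻¹) :
    single (ap.pointMap t x) (1 : K) ∈ ap.D t := by
  rw [← ap.α_single hx]
  exact ap.α_maps t _ hx

theorem pointMap_eq_iff {t : G} {x y : X} (hx : single x (1 : K) ∈ ap.D t⁻¹) :
    ap.pointMap t x = y ↔ ap.α t (single x 1) = single y (1 : K) := by
  rw [ap.α_single hx, single_left_inj one_ne_zero]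

theorem pointMap_one (x : X) : ap.pointMap 1 x = x := by
  rw [ap.pointMap_eq_iff (by simp [ap.D_one]), ap.α_one]

theorem pointMap_inv_pointMap {t : G} {x : X} (hx : single x (1 : K) ∈ ap.D t⁻¹) :
    ap.pointMap t⁻¹ (ap.pointMap t x) = x := by
  rw [ap.pointMap_eq_iff (by simpa using ap.pointMap_mem hx), ← ap.α_single hx, ap.α_inv t _ hx]

theorem pointMap_image (t s : G) :
    ap.pointMap t '' {x | single x (1 : K) ∈ ap.D t⁻¹ ∩ ap.D s} =
      {y | single y (1 : K) ∈ ap.D t ∩ ap.D (t * s)} := by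
  ext y
  constructor
  · rintro ⟨x, hx, rfl⟩
    show single (ap.pointMap t x) (1 : K) ∈ ap.D t ∩ ap.D (t * s)
    rw [← ap.α_single hx.1, ← ap.α_image]
    exact ⟨_, hx, rfl⟩
  · intro hy
    obtain ⟨g, hg, hgy⟩ : single y (1 : K) ∈ ap.α t '' (ap.D t⁻¹ ∩ ap.D s) := by
      rwa [ap.α_image]
    have hyD : single y (1 : K) ∈ ap.D t⁻¹⁻¹ := by
      rw [inv_inv, ← hgy]
      exact ap.α_maps t g hg.1
    have hg_eq : g = single (ap.pointMap t⁻¹ y) 1 := by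
      rw [← ap.α_single hyD, ← hgy, ap.α_inv t g hg.1]
    subst hg_eq
    exact ⟨_, hg, (ap.pointMap_eq_iff hg.1).mpr hgy⟩

theorem pointMap_pointMap {t s : G} {x : X} (hs : single x (1 : K) ∈ ap.D s⁻¹)
    (hts : single x (1 : K) ∈ ap.D (s⁻¹ * t⁻¹)) :
    ap.pointMap t (ap.pointMap s x) = ap.pointMap (t * s) x := by
  have hsx : single (ap.pointMap s x) (1 : K) ∈ ap.D t⁻¹ := by
    have h : ap.α s (single x 1) ∈ ap.D s ∩ ap.D (s * (s⁻¹ * t⁻¹)) :=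
      ap.α_image s _ ▸ Set.mem_image_of_mem (ap.α s) ⟨hs, hts⟩
    simpa [ap.α_single hs] using h.2
  rw [ap.pointMap_eq_iff hsx, ← ap.α_single hs, ap.α_comp t s _ hs hts,
    ap.α_single (by rwa [mul_inv_rev])]

noncomputable def toPartialAction : PartialAction G X where
  Xt t := {x | single x (1 : K) ∈ ap.D t}
  h := ap.pointMap
  Xt_one := by simp [ap.D_one]
  h_one := ap.pointMap_one
  maps_to _ _ := ap.pointMap_mem
  h_inv _ _ := ap.pointMap_inv_pointMap
  image_eq := ap.pointMap_image
  h_comp _ _ _ := ap.pointMap_pointMap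

theorem α_apply {t : G} {f : X →₀ K} (hf : f ∈ ap.D t⁻¹) {x : X}
    (hx : single x (1 : K) ∈ ap.D t) : ap.α t f x = f (ap.pointMap t⁻¹ x) := by
  have hw := ap.pointMap_mem (t := t⁻¹) (by rwa [inv_inv])
  have hαw : ap.α t (single (ap.pointMap t⁻¹ x) 1) = single x (1 : K) := by
    rw [← ap.α_single (by rwa [inv_inv]), ap.α_α_inv t hx]
  simpa [hαw] using congrArg (· x) (ap.α_single_mul hw hf)

theorem α_apply_eq_zero {t : G} {f : X →₀ K} (hf : f ∈ ap.D t⁻¹) {x : X}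
    (hx : single x (1 : K) ∉ ap.D t) : ap.α t f x = 0 :=
  not_not.mp fun h => hx (ap.single_mem_of_apply_ne_zero (ap.α_maps t f hf) h)

end AlgPartialAction

/-- Every partial action `({D_t}, {α_t})` of `G` on the algebra
`F₀(X) = X →₀ K` arises from a partial action `({X_t}, {h_t})` of `G` on the set `X`:
there are subsets `X_t ⊆ X` and partial bijections `h_t` forming a partial action on `X`
with `D t = F₀(X_t)` and `α t f = f ∘ h t⁻¹` on `D t⁻¹`. -/
theorem statement9 (K : Type*) [Field K] {G X : Type*} [Group G]
    (ap : AlgPartialAction G K (X →₀ K)) :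
    ∃ pa : PartialAction G X,
      (∀ t, ap.D t = {f : X →₀ K | ∀ x ∉ pa.Xt t, f x = 0}) ∧
      (∀ t, ∀ f ∈ ap.D t⁻¹,
        (∀ x ∈ pa.Xt t, ap.α t f x = f (pa.h t⁻¹ x)) ∧
        (∀ x ∉ pa.Xt t, ap.α t f x = 0)) :=
  ⟨ap.toPartialAction, ap.D_eq, fun _ _ hf =>
    ⟨fun _ => ap.α_apply hf, fun _ => ap.α_apply_eq_zero hf⟩⟩
end

section
/- The map Γ : F₀(X) ⋊_α G → F₀(R) defined by Γ(fδ_t)(x,y) = f(x) if y = h_{t⁻¹}(x) and 0 otherwise (extended linearly) is injective when the partial action is free. -/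
variable {G X : Type*} [Group G]

open Classical

variable {K : Type*} [Field K]

/-- The convolution product on `K`-valued functions on `X × X`:
`(f ∗ g)(x, z) = Σ_{s ∈ G, x ∈ X_{s⁻¹}} f(x, h_s x) · g(h_s x, z)`
(the sum is a `finsum`, hence well-defined; it is finite for finitely
supported functions on `R` when the action is free). -/
noncomputable def conv (pa : PartialAction G X) (f g : X × X → K) : X × X → K :=
  fun p => ∑ᶠ s ∈ {s : G | p.1 ∈ pa.Xt s⁻¹}, f (p.1, pa.h s p.1) * g (pa.h s p.1, p.2)

/-- Membership in `F₀(R)`: finitely supported functions `X × X → K`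
supported on the equivalence relation `R`. -/
def MemF0R (pa : PartialAction G X) (f : X × X → K) : Prop :=
  (Function.support f).Finite ∧ Function.support f ⊆ pa.Rel

/-- An element `Σ_t a_t δ_t` of the partial skew group ring `F₀(X) ⋊_α G`,
encoded as `a : G → X → K` (`a t x` is the value of the coefficient `a_t ∈ D_t`
at `x`): finitely many nonzero coefficients, each finitely supported and
supported in `X_t`. -/
def MemSkew (pa : PartialAction G X) (a : G → X → K) : Prop :=
  (Function.support a).Finite ∧
    ∀ t, (Function.support (a t)).Finite ∧ ∀ x, a t x ≠ 0 → x ∈ pa.Xt t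

/-- The product of the partial skew group ring `F₀(X) ⋊_α G`, determined by
`(a_t δ_t)(b_s δ_s) = α_t(α_{t⁻¹}(a_t) b_s) δ_{ts}` with `α_t(f) = f ∘ h_{t⁻¹}`;
pointwise it reads `(a ⋆ b)_r(x) = Σ_{t, x ∈ X_t} a_t(x) · b_{t⁻¹r}(h_{t⁻¹} x)`. -/
noncomputable def skewMul (pa : PartialAction G X) (a b : G → X → K) : G → X → K :=
  fun r x => ∑ᶠ t ∈ {t : G | x ∈ pa.Xt t}, a t x * b (t⁻¹ * r) (pa.h t⁻¹ x)

/-- The map `Γ : F₀(X) ⋊_α G → F₀(R)`, `Γ(Σ_t f_t δ_t)(x, y) = Σ_{t, y = h_{t⁻¹} x} f_t(x)`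
(for a single term: `Γ(f δ_t)(x,y) = f(x)` if `y = h_{t⁻¹}(x)`, else `0`). -/
noncomputable def Gam (pa : PartialAction G X) (a : G → X → K) : X × X → K :=
  fun p => ∑ᶠ t ∈ {t : G | p.1 ∈ pa.Xt t ∧ pa.h t⁻¹ p.1 = p.2}, a t p.1

/-- The single term `f δ_t` of the partial skew group ring. -/
noncomputable def single (t : G) (f : X → K) : G → X → K :=
  fun t' => if t' = t then f else 0

lemma key_free (pa : PartialAction G X) (hfree : pa.Free) {t s : G} {x : X}
    (hxt : x ∈ pa.Xt t) (hxs : x ∈ pa.Xt s) (heq : pa.h s⁻¹ x = pa.h t⁻¹ x) : s = t := by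
  have hxt' : x ∈ pa.Xt t⁻¹⁻¹ := by simpa using hxt
  have hxs' : x ∈ pa.Xt s⁻¹⁻¹ := by simpa using hxs
  set z := pa.h t⁻¹ x with hz
  have hzt : z ∈ pa.Xt t⁻¹ := pa.maps_to t⁻¹ x hxt'
  have hzs : z ∈ pa.Xt s⁻¹ := heq ▸ pa.maps_to s⁻¹ x hxs'
  have hxtz : pa.h t z = x := by simpa using pa.h_inv t⁻¹ x hxt'
  have hxsz : pa.h s z = x := by
    have := pa.h_inv s⁻¹ x hxs'
    simpa [heq] using this
  have hximg : x ∈ pa.Xt (t * s⁻¹) := by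
    have hm : pa.h t z ∈ pa.h t '' (pa.Xt t⁻¹ ∩ pa.Xt s⁻¹) := ⟨z, ⟨hzt, hzs⟩, rfl⟩
    rw [pa.image_eq t s⁻¹] at hm
    exact (hxtz ▸ hm).2
  have hcomp : pa.h s (pa.h t⁻¹ x) = pa.h (s * t⁻¹) x := by
    apply pa.h_comp s t⁻¹ x
    · simpa using hxt
    · simpa using hximg
  have hfix : pa.h (s * t⁻¹) x = x := by rw [← hcomp, ← hz, hxsz]
  have hmem : x ∈ pa.Xt (s * t⁻¹)⁻¹ := by simpa [mul_inv_rev] using hximg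
  exact mul_inv_eq_one.mp (hfree (s * t⁻¹) x hmem hfix)

lemma Gam_eval (pa : PartialAction G X) (hfree : pa.Free) (a : G → X → K)
    {t : G} {x : X} (hxt : x ∈ pa.Xt t) :
    Gam pa a (x, pa.h t⁻¹ x) = a t x := by
  have hset : {s : G | x ∈ pa.Xt s ∧ pa.h s⁻¹ x = pa.h t⁻¹ x} = {t} := by
    ext s
    simp only [Set.mem_setOf_eq, Set.mem_singleton_iff]
    constructor
    · rintro ⟨h1, h2⟩; exact key_free pa hfree hxt h1 h2
    · rintro rfl; exact ⟨hxt, rfl⟩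
  show (∑ᶠ s ∈ {s : G | x ∈ pa.Xt s ∧ pa.h s⁻¹ x = pa.h t⁻¹ x}, a s x) = a t x
  rw [hset]
  exact finsum_mem_singleton

/-- When the partial action is free, the map
`Γ : F₀(X) ⋊_α G → F₀(R)` is injective. -/
theorem statement12 (pa : PartialAction G X) (hfree : pa.Free) :
    Set.InjOn (Gam pa) {a : G → X → K | MemSkew pa a} := by
  intro a ha b hb hab
  funext t x
  by_cases hx : x ∈ pa.Xt t
  · have h := congrFun hab (x, pa.h t⁻¹ x)
    rwa [Gam_eval pa hfree a hx, Gam_eval pa hfree b hx] at h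
  · have h1 : a t x = 0 := by
      by_contra h; exact hx ((ha.2 t).2 x h)
    have h2 : b t x = 0 := by
      by_contra h; exact hx ((hb.2 t).2 x h)
    rw [h1, h2]
end

section
/- The map Γ : F₀(X) ⋊_α G → F₀(R) is multiplicative: Γ(f_t δ_t ∗ f_s δ_s) = Γ(f_t δ_t) ∗ Γ(f_s δ_s), where the left product is the skew group ring product and the right is convolution in F₀(R). -/
variable {G X : Type*} [Group G]

open Classical

variable {K : Type*} [Field K]

lemma finsum_mem_single_like {α M : Type*} [AddCommMonoid M] (S : Set α) (v : α → M)
    (a : α) (h : ∀ i, i ≠ a → i ∈ S → v i = 0) :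
    ∑ᶠ i ∈ S, v i = if a ∈ S then v a else 0 := by
  rw [finsum_mem_def, finsum_eq_single _ a]
  · by_cases ha : a ∈ S <;> simp [Set.indicator, ha]
  · intro x hx
    by_cases hxS : x ∈ S
    · simp [Set.indicator, hxS, h x hx hxS]
    · simp [Set.indicator, hxS]

lemma free_inj (pa : PartialAction G X) (hfree : pa.Free) (a b : G) (x : X)
    (hxa : x ∈ pa.Xt a⁻¹) (hxb : x ∈ pa.Xt b⁻¹) (heq : pa.h a x = pa.h b x) : a = b := by
  have hy : pa.h a x ∈ pa.Xt a ∩ pa.Xt (a * b⁻¹) := by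
    rw [← pa.image_eq a b⁻¹]
    exact ⟨x, ⟨hxa, by simpa using hxb⟩, rfl⟩
  have hxinv : pa.h a⁻¹ (pa.h a x) = x := pa.h_inv a x hxa
  have hcomp : pa.h b (pa.h a⁻¹ (pa.h a x)) = pa.h (b * a⁻¹) (pa.h a x) :=
    pa.h_comp b a⁻¹ (pa.h a x) (by simpa using hy.1) (by simpa using hy.2)
  have : pa.h (b * a⁻¹) (pa.h a x) = pa.h a x := by
    rw [← hcomp, hxinv, heq]
  have h1 : b * a⁻¹ = 1 := hfree _ _ (by simpa using hy.2) this
  have := mul_inv_eq_one.mp h1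
  exact this.symm

/-- `Γ` is multiplicative: for single terms `f_t δ_t`, `f_s δ_s` of the
partial skew group ring (free partial action), `Γ(f_t δ_t ∗ f_s δ_s) = Γ(f_t δ_t) ∗ Γ(f_s δ_s)`,
the right-hand product being convolution in `F₀(R)`. -/
theorem statement13 (pa : PartialAction G X) (hfree : pa.Free)
    (t s : G) (f g : X → K)
    (hf : (Function.support f).Finite ∧ ∀ x, f x ≠ 0 → x ∈ pa.Xt t)
    (hg : (Function.support g).Finite ∧ ∀ x, g x ≠ 0 → x ∈ pa.Xt s) :
    Gam pa (skewMul pa (single t f) (single s g))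
      = conv pa (Gam pa (single t f)) (Gam pa (single s g)) := by
  -- Step A: evaluate the skew product of the two single terms
  have hA : ∀ r x, skewMul pa (single t f) (single s g) r x
      = if x ∈ pa.Xt t ∧ r = t * s then f x * g (pa.h t⁻¹ x) else 0 := by
    intro r x
    rw [skewMul, finsum_mem_single_like _ _ t
      (by
        intro i hi _
        simp [single, hi])]
    by_cases hxt : x ∈ pa.Xt t
    · simp only [Set.mem_setOf_eq, hxt, if_true, single, if_pos rfl, true_and]
      by_cases hr : r = t * s
      · rw [if_pos hr, if_pos (by rw [hr]; group)]
      · rw [if_neg hr, if_neg (by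
          intro hc
          exact hr (by rw [← hc]; group)), Pi.zero_apply, mul_zero]
    · simp [Set.mem_setOf_eq, hxt]
  -- Step B: evaluate Γ of a single term
  have hG : ∀ (u : G) (φ : X → K) (p : X × X), Gam pa (single u φ) p
      = if p.1 ∈ pa.Xt u ∧ pa.h u⁻¹ p.1 = p.2 then φ p.1 else 0 := by
    intro u φ p
    rw [Gam, finsum_mem_single_like _ _ u
      (by
        intro i hi _
        simp [single, hi])]
    simp only [Set.mem_setOf_eq, single, if_pos rfl, if_true]
  funext p
  obtain ⟨x, z⟩ := p
  -- LHS
  have hLHS : Gam pa (skewMul pa (single t f) (single s g)) (x, z)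
      = if (x ∈ pa.Xt (t * s) ∧ pa.h (t * s)⁻¹ x = z) ∧ x ∈ pa.Xt t
          then f x * g (pa.h t⁻¹ x) else 0 := by
    rw [Gam, finsum_mem_single_like _ _ (t * s)
      (by
        intro i hi _
        rw [hA]
        exact if_neg (by tauto))]
    simp only [Set.mem_setOf_eq, hA]
    split_ifs <;> tauto
  -- RHS
  have hRHS : conv pa (Gam pa (single t f)) (Gam pa (single s g)) (x, z)
      = if x ∈ pa.Xt t ∧ pa.h t⁻¹ x ∈ pa.Xt s ∧ pa.h s⁻¹ (pa.h t⁻¹ x) = z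
          then f x * g (pa.h t⁻¹ x) else 0 := by
    rw [conv, finsum_mem_single_like _ _ t⁻¹
      (by
        intro i hi hiS
        rw [hG]
        by_cases hF : x ∈ pa.Xt t ∧ pa.h t⁻¹ x = pa.h i x
        · exact absurd (free_inj pa hfree t⁻¹ i x (by simpa using hF.1) hiS hF.2).symm hi
        · rw [if_neg hF, zero_mul])]
    simp only [Set.mem_setOf_eq, inv_inv]
    by_cases hxt : x ∈ pa.Xt t
    · rw [if_pos hxt, hG, hG, if_pos ⟨hxt, rfl⟩]
      by_cases hGs : pa.h t⁻¹ x ∈ pa.Xt s ∧ pa.h s⁻¹ (pa.h t⁻¹ x) = z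
      · rw [if_pos hGs, if_pos ⟨hxt, hGs.1, hGs.2⟩]
      · rw [if_neg hGs, if_neg (by tauto), mul_zero]
    · rw [if_neg hxt, if_neg (by tauto)]
  rw [hLHS, hRHS]
  -- final pointwise comparison
  by_cases h0 : f x * g (pa.h t⁻¹ x) = 0
  · split_ifs <;> simp [h0]
  · have hfx : f x ≠ 0 := fun hc => h0 (by rw [hc, zero_mul])
    have hgy : g (pa.h t⁻¹ x) ≠ 0 := fun hc => h0 (by rw [hc, mul_zero])
    have hxt : x ∈ pa.Xt t := hf.2 x hfx
    have hys : pa.h t⁻¹ x ∈ pa.Xt s := hg.2 _ hgy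
    have hyinv : pa.h t⁻¹ x ∈ pa.Xt t⁻¹ := pa.maps_to t⁻¹ x (by simpa using hxt)
    have hback : pa.h t (pa.h t⁻¹ x) = x := by
      have := pa.h_inv t⁻¹ x (by simpa using hxt)
      simpa using this
    have hxts : x ∈ pa.Xt (t * s) := by
      have : pa.h t (pa.h t⁻¹ x) ∈ pa.Xt t ∩ pa.Xt (t * s) := by
        rw [← pa.image_eq t s]
        exact ⟨pa.h t⁻¹ x, ⟨hyinv, hys⟩, rfl⟩
      rw [hback] at this
      exact this.2
    have hcomp : pa.h s⁻¹ (pa.h t⁻¹ x) = pa.h (s⁻¹ * t⁻¹) x :=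
      pa.h_comp s⁻¹ t⁻¹ x (by simpa using hxt) (by simpa using hxts)
    have hiff : ((x ∈ pa.Xt (t * s) ∧ pa.h (t * s)⁻¹ x = z) ∧ x ∈ pa.Xt t)
        ↔ (x ∈ pa.Xt t ∧ pa.h t⁻¹ x ∈ pa.Xt s ∧ pa.h s⁻¹ (pa.h t⁻¹ x) = z) := by
      constructor
      · rintro ⟨⟨_, hz⟩, _⟩
        exact ⟨hxt, hys, by rw [hcomp, ← mul_inv_rev, hz]⟩
      · rintro ⟨_, _, hz⟩
        exact ⟨⟨hxts, by rw [mul_inv_rev, ← hcomp, hz]⟩, hxt⟩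
    simp only [hiff]
end

section
/- The partial skew group ring F₀(X) ⋊_α G associated to a free partial action of a group G on a set X is an associative K-algebra. -/
variable {G X : Type*} [Group G]

open Classical

variable {K : Type*} [Field K]

private lemma finsum_mem_eq_sum_ite {ι M : Type*} [AddCommMonoid M] (s : Set ι) (f : ι → M)
    (t : Finset ι) (h : Function.support f ⊆ ↑t) :
    ∑ᶠ i ∈ s, f i = ∑ i ∈ t, if i ∈ s then f i else 0 := by
  rw [finsum_mem_def, finsum_eq_sum_of_support_subset _
    (fun i hi => h (by
      intro h0
      apply hi
      simp [Set.indicator_apply, h0]))]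
  exact Finset.sum_congr rfl fun i _ => by simp [Set.indicator_apply]

private lemma mem_Xt_mul {pa : PartialAction G X} {u v : G} {x : X}
    (hu : x ∈ pa.Xt u) (hv : pa.h u⁻¹ x ∈ pa.Xt v) : x ∈ pa.Xt (u * v) := by
  have hx : x ∈ pa.Xt u⁻¹⁻¹ := by simpa using hu
  have hfix : pa.h u (pa.h u⁻¹ x) = x := by simpa using pa.h_inv u⁻¹ x hx
  have hmem : pa.h u⁻¹ x ∈ pa.Xt u⁻¹ ∩ pa.Xt v := ⟨pa.maps_to u⁻¹ x hx, hv⟩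
  have hmem2 : x ∈ pa.Xt u ∩ pa.Xt (u * v) := by
    rw [← pa.image_eq u v]
    exact ⟨pa.h u⁻¹ x, hmem, hfix⟩
  exact hmem2.2

private lemma hinv_mem {pa : PartialAction G X} {u v : G} {x : X}
    (hu : x ∈ pa.Xt u) (huv : x ∈ pa.Xt (u * v)) : pa.h u⁻¹ x ∈ pa.Xt v := by
  have hx : x ∈ pa.Xt u⁻¹⁻¹ ∩ pa.Xt (u * v) := ⟨by simpa using hu, huv⟩
  have hm : pa.h u⁻¹ x ∈ pa.Xt u⁻¹ ∩ pa.Xt (u⁻¹ * (u * v)) :=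
    (pa.image_eq u⁻¹ (u * v)) ▸ Set.mem_image_of_mem _ hx
  simpa [inv_mul_cancel_left] using hm.2

private lemma h_comp'' {pa : PartialAction G X} {u v : G} {x : X}
    (hu : x ∈ pa.Xt u) (hv : pa.h u⁻¹ x ∈ pa.Xt v) :
    pa.h v⁻¹ (pa.h u⁻¹ x) = pa.h (v⁻¹ * u⁻¹) x := by
  refine pa.h_comp v⁻¹ u⁻¹ x (by simpa using hu) ?_
  simpa using mem_Xt_mul hu hv

/-- The partial skew group ring `F₀(X) ⋊_α G` associated to a free
partial action of `G` on a set `X` is an associative `K`-algebra. -/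
theorem statement14 (pa : PartialAction G X) (hfree : pa.Free)
    (a b c : G → X → K) (ha : MemSkew pa a) (hb : MemSkew pa b) (hc : MemSkew pa c) :
    skewMul pa (skewMul pa a b) c = skewMul pa a (skewMul pa b c) := by
  classical
  funext r x
  set A := ha.1.toFinset with hA
  set B := hb.1.toFinset with hBdef
  set T := Finset.image (fun p : G × G => p.1 * p.2) (A ×ˢ B) with hT
  have haA : ∀ {u : G}, a u x ≠ 0 → u ∈ A := by
    intro u h
    exact ha.1.mem_toFinset.2 (fun h0 => h (by rw [h0]; rfl))
  have hbB : ∀ {v : G} {y : X}, b v y ≠ 0 → v ∈ B := by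
    intro v y h
    exact hb.1.mem_toFinset.2 (fun h0 => h (by rw [h0]; rfl))
  -- the common double-sum form
  set D : G → G → K := fun u v =>
    if x ∈ pa.Xt (u * v) then
      (if x ∈ pa.Xt u then a u x * b v (pa.h u⁻¹ x) else 0) *
        c ((u * v)⁻¹ * r) (pa.h (u * v)⁻¹ x)
    else 0 with hD
  have hLHS : skewMul pa (skewMul pa a b) c r x = ∑ u ∈ A, ∑ v ∈ B, D u v := by
    show (∑ᶠ t ∈ {t : G | x ∈ pa.Xt t},
        (skewMul pa a b) t x * c (t⁻¹ * r) (pa.h t⁻¹ x)) = _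
    rw [finsum_mem_eq_sum_ite _ _ T ?hsub]
    case hsub =>
      intro t ht
      have h1 : (skewMul pa a b) t x ≠ 0 := fun h0 => ht (by simp [h0])
      have h2 : ∑ᶠ u ∈ {u : G | x ∈ pa.Xt u},
          a u x * b (u⁻¹ * t) (pa.h u⁻¹ x) ≠ 0 := h1
      obtain ⟨u, -, hu⟩ := exists_ne_zero_of_finsum_mem_ne_zero h2
      have hau : a u x ≠ 0 := fun h0 => hu (by simp [h0])
      have hbu : b (u⁻¹ * t) (pa.h u⁻¹ x) ≠ 0 := fun h0 => hu (by simp [h0])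
      refine Finset.mem_coe.2 (Finset.mem_image.2 ⟨(u, u⁻¹ * t), ?_, by
        simp [mul_inv_cancel_left]⟩)
      exact Finset.mem_product.2 ⟨haA hau, hbB hbu⟩
    have step1 : ∀ t : G,
        (if t ∈ {t : G | x ∈ pa.Xt t} then
          (skewMul pa a b) t x * c (t⁻¹ * r) (pa.h t⁻¹ x) else 0)
        = ∑ u ∈ A, (if x ∈ pa.Xt t then
            (if x ∈ pa.Xt u then a u x * b (u⁻¹ * t) (pa.h u⁻¹ x) else 0) *
              c (t⁻¹ * r) (pa.h t⁻¹ x) else 0) := by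
      intro t
      have hinner : (skewMul pa a b) t x
          = ∑ u ∈ A, (if x ∈ pa.Xt u then a u x * b (u⁻¹ * t) (pa.h u⁻¹ x) else 0) := by
        show (∑ᶠ u ∈ {u : G | x ∈ pa.Xt u}, a u x * b (u⁻¹ * t) (pa.h u⁻¹ x)) = _
        refine finsum_mem_eq_sum_ite _ _ A ?_
        intro u hu
        have hau : a u x ≠ 0 := fun h0 => hu (by simp [h0])
        exact Finset.mem_coe.2 (haA hau)
      by_cases hP : x ∈ pa.Xt t
      · simp only [Set.mem_setOf_eq, hP, if_true, hinner, Finset.sum_mul]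
      · simp [hP]
    rw [Finset.sum_congr rfl (fun t _ => step1 t), Finset.sum_comm]
    refine Finset.sum_congr rfl fun u hu => ?_
    -- reindex t = u * v
    have himg : B.image (fun v => u * v) ⊆ T := by
      intro t ht
      obtain ⟨v, hv, rfl⟩ := Finset.mem_image.1 ht
      exact Finset.mem_image.2 ⟨(u, v), Finset.mem_product.2 ⟨hu, hv⟩, rfl⟩
    have hvanish : ∀ t ∈ T, t ∉ B.image (fun v => u * v) →
        (if x ∈ pa.Xt t then
          (if x ∈ pa.Xt u then a u x * b (u⁻¹ * t) (pa.h u⁻¹ x) else 0) *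
            c (t⁻¹ * r) (pa.h t⁻¹ x) else 0) = 0 := by
      intro t _ hnot
      have hb0 : b (u⁻¹ * t) = 0 := by
        by_contra hne
        have : u⁻¹ * t ∈ B := hb.1.mem_toFinset.2 hne
        exact hnot (Finset.mem_image.2 ⟨u⁻¹ * t, this, by simp [mul_inv_cancel_left]⟩)
      simp [hb0]
    rw [← Finset.sum_subset himg hvanish,
      Finset.sum_image (fun x _ y _ h => mul_left_cancel h)]
    refine Finset.sum_congr rfl fun v hv => ?_
    simp only [hD, inv_mul_cancel_left]
  have hRHS : skewMul pa a (skewMul pa b c) r x = ∑ u ∈ A, ∑ v ∈ B, D u v := by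
    show (∑ᶠ u ∈ {u : G | x ∈ pa.Xt u},
        a u x * (skewMul pa b c) (u⁻¹ * r) (pa.h u⁻¹ x)) = _
    rw [finsum_mem_eq_sum_ite _ _ A ?hsub]
    case hsub =>
      intro u hu
      have hau : a u x ≠ 0 := fun h0 => hu (by simp [h0])
      exact Finset.mem_coe.2 (haA hau)
    refine Finset.sum_congr rfl fun u _ => ?_
    have hinner : (skewMul pa b c) (u⁻¹ * r) (pa.h u⁻¹ x)
        = ∑ v ∈ B, (if pa.h u⁻¹ x ∈ pa.Xt v then
            b v (pa.h u⁻¹ x) * c (v⁻¹ * (u⁻¹ * r)) (pa.h v⁻¹ (pa.h u⁻¹ x)) else 0) := by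
      show (∑ᶠ v ∈ {v : G | pa.h u⁻¹ x ∈ pa.Xt v},
          b v (pa.h u⁻¹ x) * c (v⁻¹ * (u⁻¹ * r)) (pa.h v⁻¹ (pa.h u⁻¹ x))) = _
      refine finsum_mem_eq_sum_ite _ _ B ?_
      intro v hv
      have hbv : b v (pa.h u⁻¹ x) ≠ 0 := fun h0 => hv (by simp [h0])
      exact Finset.mem_coe.2 (hbB hbv)
    rw [hinner]
    by_cases hP : x ∈ pa.Xt u
    · simp only [Set.mem_setOf_eq, hP, if_true, Finset.mul_sum]
      refine Finset.sum_congr rfl fun v _ => ?_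
      by_cases hv : pa.h u⁻¹ x ∈ pa.Xt v
      · have huv : x ∈ pa.Xt (u * v) := mem_Xt_mul hP hv
        have hcomp := h_comp'' hP hv
        simp only [hD, hv, huv, hP, if_true, hcomp, mul_inv_rev, mul_assoc]
      · have huv : x ∉ pa.Xt (u * v) := fun h => hv (hinv_mem hP h)
        simp [hD, hv, huv]
    · simp only [Set.mem_setOf_eq, hP, if_false]
      refine (Finset.sum_eq_zero fun v _ => ?_).symm
      simp [hD, hP]
  rw [hLHS, hRHS]
end

section
/- In F₀(R), if f is a nonzero element of an ideal I and f(y, h_t(y)) ≠ 0, then the delta function δ_{(y, h_t(y))} belongs to I; indeed δ_{(y,h_t(y))} is a scalar multiple of δ_{(y,y)} ∗ f ∗ δ_{(h_t(y), h_t(y))}. -/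
variable {G X : Type*} [Group G]

open Classical

variable {K : Type*} [Field K]

/-- The indicator (Dirac delta) function of a point `p ∈ X × X`. -/
noncomputable def deltaFn (p : X × X) : X × X → K := fun q => if q = p then 1 else 0

/-- A two-sided ideal of the convolution algebra `F₀(R)`: a set of elements of `F₀(R)`
closed under addition and scalar multiplication and absorbing under convolution on
both sides. -/
def IsIdealF0R (pa : PartialAction G X) (I : Set (X × X → K)) : Prop :=
  (∀ f ∈ I, MemF0R pa f) ∧ (0 : X × X → K) ∈ I ∧
    (∀ f ∈ I, ∀ g ∈ I, f + g ∈ I) ∧ (∀ (k : K), ∀ f ∈ I, k • f ∈ I) ∧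
    (∀ f ∈ I, ∀ g : X × X → K, MemF0R pa g → conv pa g f ∈ I ∧ conv pa f g ∈ I)

lemma finsum_mem_eq_single' {α M : Type*} [AddCommMonoid M] {s : Set α} {f : α → M}
    (a : α) (ha : a ∈ s) (h : ∀ x ∈ s, x ≠ a → f x = 0) : ∑ᶠ x ∈ s, f x = f a := by
  rw [show (∑ᶠ x ∈ s, f x) = ∑ᶠ x ∈ ({a} : Set α), f x from
    finsum_mem_inter_support_eq f s {a} (by
      ext x
      simp only [Set.mem_inter_iff, Function.mem_support, Set.mem_singleton_iff]
      constructor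
      · rintro ⟨hxs, hfx⟩
        exact ⟨by_contra fun hne => hfx (h x hxs hne), hfx⟩
      · rintro ⟨rfl, hfx⟩
        exact ⟨ha, hfx⟩)]
  exact finsum_mem_singleton

/-- In `F₀(R)` (free partial action), if `f` is a nonzero element of an
ideal `I` and `f(y, h_t y) ≠ 0`, then `δ_{(y, h_t y)} ∈ I`; indeed `δ_{(y, h_t y)}` is a
scalar multiple of `δ_{(y,y)} ∗ f ∗ δ_{(h_t y, h_t y)}`. -/
theorem statement15 (pa : PartialAction G X) (hfree : pa.Free)
    (I : Set (X × X → K)) (hI : IsIdealF0R pa I) (f : X × X → K) (hf : f ∈ I)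
    (t : G) (y : X) (hy : y ∈ pa.Xt t⁻¹) (hfy : f (y, pa.h t y) ≠ 0) :
    (deltaFn (y, pa.h t y) : X × X → K) ∈ I ∧
    ∃ c : K, (deltaFn (y, pa.h t y) : X × X → K)
      = c • conv pa (conv pa (deltaFn (y, y)) f) (deltaFn (pa.h t y, pa.h t y)) := by
  classical
  set z := pa.h t y with hz
  -- uniqueness of the group element realizing a pair, by freeness
  have huniq : ∀ s : G, y ∈ pa.Xt s⁻¹ → pa.h s y = z → s = t := by
    intro s hys hst
    have hz_ts : z ∈ pa.Xt (t * s⁻¹) := by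
      have himg : pa.h t y ∈ pa.Xt t ∩ pa.Xt (t * s⁻¹) := by
        rw [← pa.image_eq t s⁻¹]
        exact ⟨y, ⟨hy, hys⟩, rfl⟩
      exact himg.2
    have hzt : z ∈ pa.Xt t := pa.maps_to t y hy
    have hcomp := pa.h_comp s t⁻¹ z (by simpa using hzt) (by simpa using hz_ts)
    rw [hz, pa.h_inv t y hy] at hcomp
    have hfix : pa.h (s * t⁻¹) z = z := by rw [← hcomp, hst]
    have h1 : s * t⁻¹ = 1 := hfree (s * t⁻¹) z (by simpa [mul_inv_rev] using hz_ts) hfix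
    exact mul_inv_eq_one.mp h1
  have hone : ∀ x : X, x ∈ pa.Xt (1 : G)⁻¹ := by
    intro x; rw [inv_one, pa.Xt_one]; trivial
  -- compute the first convolution
  have hF : ∀ p : X × X, conv pa (deltaFn (y, y)) f p
      = if p.1 = y then f (y, p.2) else 0 := by
    intro p
    unfold conv
    by_cases hp : p.1 = y
    · rw [if_pos hp]
      rw [finsum_mem_eq_single' (1 : G) (hone p.1)]
      · rw [pa.h_one, hp]
        simp [deltaFn]
      · intro s hs hsne
        have : deltaFn (y, y) (p.1, pa.h s p.1) = (0 : K) := by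
          rw [deltaFn, if_neg]
          intro hEq
          have h1 : p.1 = y := (Prod.mk.injEq _ _ _ _ ▸ hEq).1
          have h2 : pa.h s p.1 = y := (Prod.mk.injEq _ _ _ _ ▸ hEq).2
          exact hsne (hfree s p.1 hs (by rw [h2, h1]))
        rw [this, zero_mul]
    · rw [if_neg hp]
      apply finsum_mem_eq_zero_of_forall_eq_zero
      intro s _
      have : deltaFn (y, y) (p.1, pa.h s p.1) = (0 : K) := by
        rw [deltaFn, if_neg]
        intro hEq
        exact hp (Prod.mk.injEq _ _ _ _ ▸ hEq).1
      rw [this, zero_mul]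
  -- compute the second convolution
  have hFfun : conv pa (deltaFn (y, y)) f
      = fun p : X × X => if p.1 = y then f (y, p.2) else 0 := funext hF
  have hG : conv pa (conv pa (deltaFn (y, y)) f) (deltaFn (z, z))
      = (f (y, z)) • (deltaFn (y, z) : X × X → K) := by
    rw [hFfun]
    funext p
    unfold conv
    by_cases hp : p.1 = y
    · rw [finsum_mem_eq_single' t (by simpa [hp] using hy)]
      · simp only
        rw [if_pos hp, hp]
        simp only [Pi.smul_apply, smul_eq_mul, deltaFn, hz]
        by_cases hw : p.2 = pa.h t y
        · simp [hw, Prod.ext_iff, hp]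
        · rw [if_neg (by simp [Prod.ext_iff, hw]), if_neg (by simp [Prod.ext_iff, hw]), mul_zero]
      · intro s hs hsne
        have : deltaFn (z, z) (pa.h s p.1, p.2) = (0 : K) := by
          rw [deltaFn, if_neg]
          intro hEq
          have h1 : pa.h s p.1 = z := (Prod.mk.injEq _ _ _ _ ▸ hEq).1
          exact hsne (huniq s (hp ▸ hs) (by rw [← hp]; exact h1))
        rw [this, mul_zero]
    · rw [finsum_mem_eq_zero_of_forall_eq_zero]
      · simp only [Pi.smul_apply, smul_eq_mul, deltaFn]
        rw [if_neg (by simp [Prod.ext_iff, hp]), mul_zero]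
      · intro s _
        simp only [if_neg hp, zero_mul]
  -- membership facts
  have hdel : ∀ x : X, MemF0R pa (deltaFn (x, x) : X × X → K) := by
    intro x
    constructor
    · apply Set.Finite.subset (Set.finite_singleton (x, x))
      intro q hq
      simp only [Function.mem_support, deltaFn] at hq
      by_contra hne
      exact hq (if_neg hne)
    · intro q hq
      simp only [Function.mem_support, deltaFn] at hq
      have : q = (x, x) := by by_contra hne; exact hq (if_neg hne)
      subst this
      exact ⟨1, hone x, pa.h_one x⟩
  have hFmem : conv pa (deltaFn (y, y)) f ∈ I :=
    ((hI.2.2.2.2 f hf (deltaFn (y, y)) (hdel y)).1)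
  have hGmem : conv pa (conv pa (deltaFn (y, y)) f) (deltaFn (z, z)) ∈ I :=
    ((hI.2.2.2.2 _ hFmem (deltaFn (z, z)) (hdel z)).2)
  have hkey : (deltaFn (y, z) : X × X → K)
      = (f (y, z))⁻¹ • conv pa (conv pa (deltaFn (y, y)) f) (deltaFn (z, z)) := by
    rw [hG, smul_smul, inv_mul_cancel₀ hfy, one_smul]
  refine ⟨?_, ⟨(f (y, z))⁻¹, hkey⟩⟩
  rw [hkey]
  exact hI.2.2.2.1 _ _ hGmem
end

section
/- Every two-sided ideal I of F₀(R) equals F₀((Z × Z) ∩ R) for the R-invariant set Z = {z ∈ X : ∃ f ∈ I, t ∈ G with f(z, h_t(z)) ≠ 0}; that is, ideals of F₀(R) correspond to R-invariant subsets of X. -/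
variable {G X : Type*} [Group G]

open Classical

variable {K : Type*} [Field K]

/-- A subset `Z ⊆ X` is `R`-invariant if `(z, x) ∈ R` with `z ∈ Z` implies `x ∈ Z`. -/
def RInvariant (pa : PartialAction G X) (Z : Set X) : Prop :=
  ∀ z x : X, (z, x) ∈ pa.Rel → z ∈ Z → x ∈ Z

/-!
For a free action, `s ↦ h_s x` identifies `{s | x ∈ X_{s⁻¹}}` with the `R`-class of `x`, so
convolution is matrix multiplication over `R` and the deltas `δ_{(x,y)}` behave like matrix
units. If `g ∈ I` has `g (x, w) ≠ 0`, then `δ_{(x,x)} ∗ g ∗ δ_{(w,y)} = g (x, w) • δ_{(x,y)}`,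
so `I` contains every `δ_{(x,y)}` with `x ∈ Z`; this gives both the `R`-invariance of `Z` and,
writing `f = ∑ f p • δ_p`, the inclusion `F₀((Z × Z) ∩ R) ⊆ I`.
-/

namespace PartialAction

variable (pa : PartialAction G X) {x : X} {s t : G}

lemma mem_Xt_mul_inv_of_mem (hx : x ∈ pa.Xt s⁻¹) (hsx : pa.h s x ∈ pa.Xt t⁻¹) :
    x ∈ pa.Xt (t * s)⁻¹ := by
  have hsx' : pa.h s x ∈ pa.Xt s⁻¹⁻¹ ∩ pa.Xt t⁻¹ := ⟨by simpa using pa.maps_to s x hx, hsx⟩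
  have := pa.image_eq s⁻¹ t⁻¹ ▸ Set.mem_image_of_mem (pa.h s⁻¹) hsx'
  rw [pa.h_inv s x hx] at this
  simpa [mul_inv_rev] using this.2

lemma h_h_of_mem (hx : x ∈ pa.Xt s⁻¹) (hsx : pa.h s x ∈ pa.Xt t⁻¹) :
    pa.h t (pa.h s x) = pa.h (t * s) x :=
  pa.h_comp t s x hx (by simpa [mul_inv_rev] using pa.mem_Xt_mul_inv_of_mem hx hsx)

lemma eq_of_h_eq (hfree : pa.Free) (hs : x ∈ pa.Xt s⁻¹) (ht : x ∈ pa.Xt t⁻¹)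
    (hst : pa.h s x = pa.h t x) : s = t := by
  have hsx : pa.h s x ∈ pa.Xt t⁻¹⁻¹ := by simpa [hst] using pa.maps_to t x ht
  have hfix : pa.h (t⁻¹ * s) x = x := by
    rw [← pa.h_h_of_mem hs hsx, hst, pa.h_inv t x ht]
  exact (inv_mul_eq_one.mp (hfree _ x (pa.mem_Xt_mul_inv_of_mem hs hsx) hfix)).symm

lemma rel_refl (x : X) : (x, x) ∈ pa.Rel :=
  ⟨1, by simp [pa.Xt_one], pa.h_one x⟩

lemma rel_symm {x y : X} (hxy : (x, y) ∈ pa.Rel) : (y, x) ∈ pa.Rel := by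
  obtain ⟨t, ht, hty : pa.h t x = y⟩ := hxy
  subst hty
  exact ⟨t⁻¹, by simpa using pa.maps_to t x ht, pa.h_inv t x ht⟩

lemma rel_trans {x y z : X} (hxy : (x, y) ∈ pa.Rel) (hyz : (y, z) ∈ pa.Rel) :
    (x, z) ∈ pa.Rel := by
  obtain ⟨s, hs, hsy : pa.h s x = y⟩ := hxy
  obtain ⟨t, ht, htz : pa.h t y = z⟩ := hyz
  subst hsy htz
  exact ⟨t * s, pa.mem_Xt_mul_inv_of_mem hs ht, (pa.h_h_of_mem hs ht).symm⟩

end PartialAction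

section Convolution

variable {pa : PartialAction G X}

lemma conv_apply_eq_finsum (hfree : pa.Free) {f : X × X → K}
    (hf : Function.support f ⊆ pa.Rel) (g : X × X → K) (p : X × X) :
    conv pa f g p = ∑ᶠ y, f (p.1, y) * g (y, p.2) := by
  have hbij : Set.BijOn (pa.h · p.1) {s | p.1 ∈ pa.Xt s⁻¹} {y | (p.1, y) ∈ pa.Rel} :=
    ⟨fun s hs => ⟨s, hs, rfl⟩, fun s hs t ht hst => pa.eq_of_h_eq hfree hs ht hst,
      fun _ ⟨s, hs, hsy⟩ => ⟨s, hs, hsy⟩⟩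
  rw [conv, finsum_mem_eq_of_bijOn (g := fun y => f (p.1, y) * g (y, p.2)) _ hbij
    fun _ _ => rfl, ← finsum_mem_univ fun y => f (p.1, y) * g (y, p.2)]
  refine finsum_mem_inter_support_eq' _ _ _ fun y hy => ?_
  exact iff_of_true (hf (left_ne_zero_of_mul hy)) trivial

lemma memF0R_deltaFn {p : X × X} (hp : p ∈ pa.Rel) : MemF0R pa (deltaFn p : X × X → K) := by
  have hsupp : Function.support (deltaFn p : X × X → K) ⊆ {p} := fun q hq => by
    by_contra hqp
    exact hq (if_neg hqp)
  exact ⟨(Set.finite_singleton p).subset hsupp, fun q hq => (hsupp hq) ▸ hp⟩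

lemma conv_deltaFn_left_apply (hfree : pa.Free) {x y : X} (hxy : (x, y) ∈ pa.Rel)
    (g : X × X → K) (p : X × X) :
    conv pa (deltaFn (x, y)) g p = if p.1 = x then g (y, p.2) else 0 := by
  rw [conv_apply_eq_finsum hfree (memF0R_deltaFn hxy).2, finsum_eq_single _ y]
  · by_cases hpx : p.1 = x <;> simp [deltaFn, hpx]
  · intro w hw
    simp [deltaFn, hw]

lemma conv_deltaFn_right_apply (hfree : pa.Free) {f : X × X → K}
    (hf : Function.support f ⊆ pa.Rel) (y z : X) (p : X × X) :
    conv pa f (deltaFn (y, z)) p = if p.2 = z then f (p.1, y) else 0 := by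
  rw [conv_apply_eq_finsum hfree hf, finsum_eq_single _ y]
  · by_cases hpz : p.2 = z <;> simp [deltaFn, hpz]
  · intro w hw
    simp [deltaFn, hw]

end Convolution

/-- The set `Z` of the paper. -/
def idealSupport (pa : PartialAction G X) (I : Set (X × X → K)) : Set X :=
  {z | ∃ f ∈ I, ∃ u : G, z ∈ pa.Xt u⁻¹ ∧ f (z, pa.h u z) ≠ 0}

namespace IsIdealF0R

variable {pa : PartialAction G X} {I : Set (X × X → K)}

lemma mem_idealSupport_of_ne_zero (hI : IsIdealF0R pa I) {f : X × X → K} (hf : f ∈ I)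
    {x y : X} (hxy : f (x, y) ≠ 0) : x ∈ idealSupport pa I := by
  obtain ⟨u, hu, hy : pa.h u x = y⟩ := (hI.1 f hf).2 hxy
  exact ⟨f, hf, u, hu, by rwa [hy]⟩

lemma mem_of_forall_deltaFn_mem (hI : IsIdealF0R pa I) {f : X × X → K}
    (hfin : (Function.support f).Finite) (hδ : ∀ p, f p ≠ 0 → deltaFn p ∈ I) : f ∈ I := by
  obtain ⟨-, hzero, hadd, hsmul, -⟩ := hI
  have hsum : f = ∑ p ∈ hfin.toFinset, f p • deltaFn p := by
    funext q
    rw [Finset.sum_apply, Finset.sum_eq_single q]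
    · simp [deltaFn]
    · intro p _ hpq
      simp [deltaFn, Ne.symm hpq]
    · intro hq
      have hfq : f q = 0 := by simpa using hq
      simp [hfq]
  rw [hsum]
  refine Finset.sum_induction _ (· ∈ I) (fun a b ha hb => hadd a ha b hb) hzero fun p hp => hsmul _ _ (hδ p ?_)
  simpa using hp

lemma deltaFn_mem (hfree : pa.Free) (hI : IsIdealF0R pa I) {x y : X}
    (hx : x ∈ idealSupport pa I) (hxy : (x, y) ∈ pa.Rel) : (deltaFn (x, y) : X × X → K) ∈ I := by
  obtain ⟨g, hg, u, hu, hgu⟩ := hx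
  set w := pa.h u x
  have hxw : (x, w) ∈ pa.Rel := ⟨u, hu, rfl⟩
  have hwy : (w, y) ∈ pa.Rel := pa.rel_trans (pa.rel_symm hxw) hxy
  set row := conv pa (deltaFn (x, x)) g
  have hrow : ∀ p : X × X, row p = if p.1 = x then g (x, p.2) else 0 :=
    conv_deltaFn_left_apply hfree (pa.rel_refl x) g
  have hrow_supp : Function.support row ⊆ pa.Rel := by
    rintro ⟨a, b⟩ hab
    rw [Function.mem_support, hrow] at hab
    split_ifs at hab with hax
    · obtain rfl : a = x := hax
      exact (hI.1 g hg).2 hab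
    · exact (hab rfl).elim
  have hrowI : row ∈ I := (hI.2.2.2.2 g hg _ (memF0R_deltaFn (pa.rel_refl x))).1
  have hprod : conv pa row (deltaFn (w, y)) = g (x, w) • deltaFn (x, y) := by
    funext p
    rw [conv_deltaFn_right_apply hfree hrow_supp, hrow]
    by_cases h1 : p.1 = x <;> by_cases h2 : p.2 = y <;>
      simp [deltaFn, h1, h2, Prod.ext_iff]
  have := hI.2.2.2.1 (g (x, w))⁻¹ _ ((hI.2.2.2.2 row hrowI _ (memF0R_deltaFn hwy)).2)
  rwa [hprod, smul_smul, inv_mul_cancel₀ hgu, one_smul] at this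

lemma rInvariant_idealSupport (hfree : pa.Free) (hI : IsIdealF0R pa I) :
    RInvariant pa (idealSupport pa I) := by
  intro z x hzx hz
  have hδ : conv pa (deltaFn (x, z)) (deltaFn (z, x)) ∈ I :=
    (hI.2.2.2.2 _ (hI.deltaFn_mem hfree hz hzx) _ (memF0R_deltaFn (pa.rel_symm hzx))).1
  refine hI.mem_idealSupport_of_ne_zero hδ (y := x) ?_
  simp [conv_deltaFn_left_apply hfree (pa.rel_symm hzx), deltaFn]

end IsIdealF0R

/-- Every two-sided ideal `I` of `F₀(R)` (free partial action) equals
`F₀((Z × Z) ∩ R)` for the `R`-invariant set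
`Z = {z : ∃ f ∈ I, t ∈ G, f(z, h_t z) ≠ 0}`; so ideals of `F₀(R)` correspond to
`R`-invariant subsets of `X`. -/
theorem statement17 (pa : PartialAction G X) (hfree : pa.Free)
    (I : Set (X × X → K)) (hI : IsIdealF0R pa I) :
    RInvariant pa {z : X | ∃ f ∈ I, ∃ u : G, z ∈ pa.Xt u⁻¹ ∧ f (z, pa.h u z) ≠ 0} ∧
    I = {f : X × X → K | MemF0R pa f ∧ ∀ p : X × X, f p ≠ 0 →
        p.1 ∈ {z : X | ∃ f ∈ I, ∃ u : G, z ∈ pa.Xt u⁻¹ ∧ f (z, pa.h u z) ≠ 0} ∧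
        p.2 ∈ {z : X | ∃ f ∈ I, ∃ u : G, z ∈ pa.Xt u⁻¹ ∧ f (z, pa.h u z) ≠ 0}} := by
  have hZ : RInvariant pa (idealSupport pa I) := hI.rInvariant_idealSupport hfree
  refine ⟨hZ, Set.Subset.antisymm (fun f hf => ⟨hI.1 f hf, fun p hp => ?_⟩) ?_⟩
  · have hp1 : p.1 ∈ idealSupport pa I := hI.mem_idealSupport_of_ne_zero hf hp
    exact ⟨hp1, hZ _ _ ((hI.1 f hf).2 hp) hp1⟩
  · rintro f ⟨hf, hsupp⟩
    exact hI.mem_of_forall_deltaFn_mem hf.1 fun p hp =>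
      hI.deltaFn_mem hfree (hsupp p hp).1 (hf.2 hp)
end
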